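/- In the root system A_l realized as {λ_i − λ_j : 1 ≤ i ≠ j ≤ l+1} in ℝ^{l+1} (λ_i the standard basis vectors, with the standard inner product), suppose l ≥ 4. Then for any two distinct positive roots α = λ_i − λ_j (i < j) and β = λ_r − λ_s (r < s) with (i,j) ≠ (r,s), there exists a root γ such that 2⟨γ,α⟩/⟨γ,γ⟩ − 2⟨γ,β⟩/⟨γ,γ⟩ is odd. -/

import Mathlib

noncomputable section

/-- Standard dot product on `ℝⁿ`. -/
def dotp {n : ℕ} (x y : Fin n → ℝ) : ℝ := ∑ i, x i * y i

/-- Killing number `2⟨γ,α⟩/⟨γ,γ⟩`. -/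
def kil {n : ℕ} (γ α : Fin n → ℝ) : ℝ := 2 * dotp γ α / dotp γ γ

/-- Standard basis vector `λ_a` of `ℝⁿ`. -/
def lamv {n : ℕ} (a : Fin n) : Fin n → ℝ := fun i => if i = a then 1 else 0

/-- Roots of `A_l` in `ℝ^{l+1}`: the vectors `λ_a − λ_b`, `a ≠ b`. -/
def rootsA (n : ℕ) : Set (Fin n → ℝ) :=
  {v | ∃ a b : Fin n, a ≠ b ∧ v = lamv a - lamv b}

/-!
Against the root `λ_a − λ_c` the Killing number of any vector `v` is `v a − v c`. Choosing `c`
outside the (at most four) indices of `α` and `β`, which needs `n ≥ 5`, the difference of the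
Killing numbers of `α` and `β` is `α a − β a`, and one of `a ∈ {i, j, r}` makes it `±1`.
-/

lemma dotp_lamv_sub_left {n : ℕ} (a b : Fin n) (v : Fin n → ℝ) :
    dotp (lamv a - lamv b) v = v a - v b := by
  simp [dotp, lamv, sub_mul, Finset.sum_sub_distrib]

lemma kil_lamv_sub {n : ℕ} {a b : Fin n} (hab : a ≠ b) (v : Fin n → ℝ) :
    kil (lamv a - lamv b) v = v a - v b := by
  have hnorm : dotp (lamv a - lamv b) (lamv a - lamv b) = 2 := by
    norm_num [dotp_lamv_sub_left, lamv, hab, hab.symm]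
  rw [kil, hnorm, dotp_lamv_sub_left]
  ring

lemma Fin.exists_ne_of_five_le {n : ℕ} (hn : 5 ≤ n) (i j r s : Fin n) :
    ∃ c, c ≠ i ∧ c ≠ j ∧ c ≠ r ∧ c ≠ s := by
  have hcard : ({i, j, r, s} : Finset (Fin n)).card < (Finset.univ : Finset (Fin n)).card := by
    rw [Finset.card_univ, Fintype.card_fin]
    exact (Finset.card_le_four).trans_lt hn
  obtain ⟨c, -, hc⟩ := Finset.exists_mem_notMem_of_card_lt_card hcard
  simp only [Finset.mem_insert, Finset.mem_singleton, not_or] at hc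
  exact ⟨c, hc⟩

lemma exists_lamv_sub_apply_sub_eq_odd {n : ℕ} {i j r s : Fin n}
    (hij : i < j) (hrs : r < s) (hne : (i, j) ≠ (r, s)) :
    ∃ a, ∃ k : ℤ, (lamv i - lamv j) a - (lamv r - lamv s) a = 2 * k + 1 := by
  by_cases hir : i = r
  · have hjs : j ≠ s := fun h => hne (by rw [hir, h])
    refine ⟨j, -1, ?_⟩
    norm_num [lamv, hij.ne', hir ▸ hij.ne', hjs]
  by_cases his : i = s
  · refine ⟨r, -1, ?_⟩
    norm_num [lamv, Ne.symm hir, (hrs.trans (his ▸ hij)).ne, hrs.ne]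
  · exact ⟨i, 0, by simp [lamv, hij.ne, hir, his]⟩

theorem stmt1 {n : ℕ} (hn : 5 ≤ n) (i j r s : Fin n)
    (hij : i < j) (hrs : r < s) (hne : (i, j) ≠ (r, s)) :
    ∃ γ ∈ rootsA n, ∃ k : ℤ,
      kil γ (lamv i - lamv j) - kil γ (lamv r - lamv s) = 2 * k + 1 := by
  obtain ⟨c, hci, hcj, hcr, hcs⟩ := Fin.exists_ne_of_five_le hn i j r s
  obtain ⟨a, k, hodd⟩ := exists_lamv_sub_apply_sub_eq_odd hij hrs hne
  have hac : a ≠ c := by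
    rintro rfl
    have : (0 : ℝ) = 2 * k + 1 := by simpa [lamv, hci, hcj, hcr, hcs] using hodd
    have : (0 : ℤ) = 2 * k + 1 := by exact_mod_cast this
    omega
  refine ⟨lamv a - lamv c, ⟨a, c, hac, rfl⟩, k, ?_⟩
  rw [kil_lamv_sub hac, kil_lamv_sub hac, ← hodd]
  simp [lamv, hci, hcj, hcr, hcs]
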